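/- arXiv:2305.08125 — 4 statements merged into one kernel-verified Lean document; each statement's English description precedes it below -/
import Mathlib

section
/- Let u_1, …, u_n be positive integers, let t and k be positive integers with t ≤ u_1 + … + u_n, and suppose that every subset S ⊆ {1,…,n} with Σ_{i∈S} u_i = t has |S| = k. Set T = 3·(u_1 + … + u_n). Let E be the PB instance with projects C = {x_1,…,x_n} ∪ {y_1,…,y_{2k+1}} ∪ {d_1,…,d_{k+1}} ∪ {p}, costs cost(x_i) = T + u_i, cost(y_j) = T, cost(d_j) = T − t + 1, cost(p) = T − t, a single voter who approves exactly the projects in C ∖ {x_1,…,x_n}, and budget B = (k+1)T, where GreedyAV is run with the tie-breaking order x_1 ≻ … ≻ x_n ≻ y_1 ≻ … ≻ y_{2k+1} ≻ d_1 ≻ … ≻ d_{k+1} ≻ p. Then there exists a set F of at most k approval flips such that p ∈ GreedyAV(E_F) if and only if there exists S ⊆ {1,…,n} with |S| = k and Σ_{i∈S} u_i = t. -/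
structure PB (C V : Type) [Fintype C] [DecidableEq C] [Fintype V] [DecidableEq V] where
  A : V → Finset C
  budget : ℕ
  cost : C → ℕ

namespace PB

variable {C V : Type} [Fintype C] [DecidableEq C] [Fintype V] [DecidableEq V]

/-- The approval score of a project: the number of voters approving it. -/
def score (E : PB C V) (c : C) : ℕ :=
  (Finset.univ.filter fun v => c ∈ E.A v).card

/-- Perform the approval flips in `F`: voter `v`'s approval set becomes
`A v ∆ {c : (v, c) ∈ F}`. -/
def flip (E : PB C V) (F : Finset (V × C)) : PB C V :=
  { E with A := fun v => symmDiff (E.A v) ((F.filter fun q => q.1 = v).image Prod.snd) }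

/-- Greedily process the given list of projects: starting from `W = ∅`,
add the currently considered project whenever it fits in the budget. -/
def greedyFold (budget : ℕ) (cost : C → ℕ) (order : List C) : Finset C :=
  order.foldl (fun W c => if (∑ x ∈ W, cost x) + cost c ≤ budget then insert c W else W) ∅

/-- The order in which GreedyAV considers the projects: non-increasing approval
score, ties broken in favor of `prec`-earlier projects. -/
noncomputable def consOrderAV (E : PB C V) (prec : C → C → Bool) : List C :=
  (Finset.univ : Finset C).toList.mergeSort fun c c' =>
    decide (E.score c' < E.score c) ||
      (decide (E.score c = E.score c') && (prec c c' || decide (c = c')))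

/-- GreedyAV with tie-breaking given by the strict relation `prec`. -/
noncomputable def greedyAV (E : PB C V) (prec : C → C → Bool) : Finset C :=
  greedyFold E.budget E.cost (consOrderAV E prec)

/-- The order in which GreedyCost considers the projects: non-increasing
approval-score-to-cost ratio (compared by cross-multiplication), ties broken in
favor of `prec`-earlier projects. -/
noncomputable def consOrderCost (E : PB C V) (prec : C → C → Bool) : List C :=
  (Finset.univ : Finset C).toList.mergeSort fun c c' =>
    decide (E.score c' * E.cost c < E.score c * E.cost c') ||
      (decide (E.score c * E.cost c' = E.score c' * E.cost c) && (prec c c' || decide (c = c')))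

/-- GreedyCost with tie-breaking given by the strict relation `prec`. -/
noncomputable def greedyCost (E : PB C V) (prec : C → C → Bool) : Finset C :=
  greedyFold E.budget E.cost (consOrderCost E prec)

/-- Cheaper-first tie-breaking: ties in approval score are broken in favor of
the cheaper project, with remaining ties broken by the residual order `prec0`. -/
def cheaperFirst (cost : C → ℕ) (prec0 : C → C → Bool) : C → C → Bool :=
  fun c c' => decide (cost c < cost c') || (decide (cost c = cost c') && prec0 c c')

end PB

/-! Statement 0: the correctness of the reduction from Sized Subset Sum to
GreedyAV-Flip-Bribery (Theorem `greedy-av-pb-npc`). -/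

/-- The projects of the reduction: `x_1, …, x_n`, `y_1, …, y_{2k+1}`,
`d_1, …, d_{k+1}`, and `p`. -/
abbrev Proj (n k : ℕ) := (Fin n ⊕ Fin (2 * k + 1)) ⊕ (Fin (k + 1) ⊕ Unit)

/-- The preferred project `p`. -/
def pProj (n k : ℕ) : Proj n k := Sum.inr (Sum.inr ())

/-- Ranks realizing the tie-breaking order `x_1 ≻ … ≻ x_n ≻ y_1 ≻ … ≻ y_{2k+1}
≻ d_1 ≻ … ≻ d_{k+1} ≻ p` (smaller rank = earlier). -/
def rank0 (n k : ℕ) : Proj n k → ℕ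
  | .inl (.inl i) => i
  | .inl (.inr j) => n + j
  | .inr (.inl j) => n + (2 * k + 1) + j
  | .inr (.inr _) => n + (2 * k + 1) + (k + 1)

/-- The costs: `cost(x_i) = T + u_i`, `cost(y_j) = T`, `cost(d_j) = T - t + 1`,
`cost(p) = T - t`, where `T = 3·(u_1 + … + u_n)`. -/
def cost0 {n : ℕ} (u : Fin n → ℕ) (t k : ℕ) : Proj n k → ℕ
  | .inl (.inl i) => 3 * (∑ j, u j) + u i
  | .inl (.inr _) => 3 * (∑ j, u j)
  | .inr (.inl _) => 3 * (∑ j, u j) - t + 1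
  | .inr (.inr _) => 3 * (∑ j, u j) - t

/-- Is a project one of the `x_i`? -/
def isX {n k : ℕ} : Proj n k → Bool
  | .inl (.inl _) => true
  | _ => false

/-- The PB instance of the reduction: a single voter approving everything
except the `x_i`, and budget `(k+1)·T`. -/
def E0 {n : ℕ} (u : Fin n → ℕ) (t k : ℕ) : PB (Proj n k) Unit where
  A := fun _ => Finset.univ.filter fun c => isX c = false
  budget := (k + 1) * (3 * ∑ j, u j)
  cost := cost0 u t k

/-! With a single voter every score is 0 or 1, so GreedyAV first runs through the approved
projects in tie-breaking order and only then through the others. Let `T = 3 ∑ u`. At most `k`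
flips leave at least `k + 1` of the `y`'s and one `d` approved. If the flipped `x`'s form the
set `X` with `s = ∑_{i ∈ X} u_i`, greedy takes all of them, then fills the budget with `y`'s up
to `kT + s` (up to `(k + 1)T` if `s = 0`), and then one `d` still fits exactly when `0 < s < t`.
Hence, just before `p` is considered, the chosen projects cost `(k + 1)T`, `kT + s + T - t + 1`
or `kT + s`, and `p`, of cost `T - t`, fits iff `s = t`; by the size condition `|X| = k` then. -/

theorem List.length_le_length_filter_not_mem_add_card {ι α : Type*} [DecidableEq ι]
    [DecidableEq α] {f : ι → α} (hf : Function.Injective f) {l : List ι} (hl : l.Nodup)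
    (F : Finset α) : l.length ≤ (l.filter fun i => f i ∉ F).length + F.card := by
  have hmem : (l.filter fun i => f i ∈ F).length ≤ F.card := by
    rw [← List.toFinset_card_of_nodup (hl.filter _)]
    exact Finset.card_le_card_of_injOn f (fun i hi => by simp_all) hf.injOn
  have := List.length_eq_length_filter_add (l := l) fun i => decide (f i ∈ F)
  simp only [decide_not] at *
  omega

namespace PB

section Greedy

variable {C : Type*} [DecidableEq C] (B : ℕ) (cost : C → ℕ)

def greedyFrom (W : Finset C) (L : List C) : Finset C :=
  L.foldl (fun W c => if (∑ x ∈ W, cost x) + cost c ≤ B then insert c W else W) W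

theorem greedyFold_eq_greedyFrom {C : Type} [DecidableEq C] (cost : C → ℕ) (L : List C) :
    greedyFold B cost L = greedyFrom B cost ∅ L := rfl

theorem greedyFrom_cons (W : Finset C) (c : C) (L : List C) :
    greedyFrom B cost W (c :: L) =
      greedyFrom B cost (if (∑ x ∈ W, cost x) + cost c ≤ B then insert c W else W) L := rfl

theorem greedyFrom_append (W : Finset C) (L₁ L₂ : List C) :
    greedyFrom B cost W (L₁ ++ L₂) = greedyFrom B cost (greedyFrom B cost W L₁) L₂ :=
  List.foldl_append

theorem subset_greedyFrom (W : Finset C) (L : List C) : W ⊆ greedyFrom B cost W L := by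
  induction L generalizing W with
  | nil => exact subset_rfl
  | cons c L ih =>
    rw [greedyFrom_cons]
    split_ifs
    · exact (Finset.subset_insert c W).trans (ih _)
    · exact ih W

theorem greedyFrom_subset (W : Finset C) (L : List C) :
    greedyFrom B cost W L ⊆ W ∪ L.toFinset := by
  induction L generalizing W with
  | nil => simp [greedyFrom]
  | cons c L ih =>
    rw [greedyFrom_cons]
    refine (ih _).trans ?_
    split_ifs <;> intro x <;> simp +contextual

theorem mem_greedyFrom_cons {W : Finset C} {c : C} (L : List C)
    (hc : (∑ x ∈ W, cost x) + cost c ≤ B) : c ∈ greedyFrom B cost W (c :: L) := by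
  rw [greedyFrom_cons, if_pos hc]
  exact subset_greedyFrom B cost _ L (Finset.mem_insert_self c W)

theorem sum_add_cost_le_of_mem_greedyFrom {W : Finset C} {L : List C} {c : C} (hcW : c ∉ W)
    (hc : c ∈ greedyFrom B cost W L) : (∑ x ∈ W, cost x) + cost c ≤ B := by
  induction L generalizing W with
  | nil => exact absurd hc hcW
  | cons d L ih =>
    rw [greedyFrom_cons] at hc
    split_ifs at hc with hfit
    · by_cases hcd : c = d
      · exact hcd ▸ hfit
      · have hsub : ∑ x ∈ W, cost x ≤ ∑ x ∈ insert d W, cost x :=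
          Finset.sum_le_sum_of_subset (Finset.subset_insert d W)
        have := ih (by simp [hcd, hcW]) hc
        omega
    · exact ih hcW hc

theorem sum_greedyFrom_of_sum_le {W : Finset C} {L : List C} (hL : L.Nodup)
    (hLW : ∀ c ∈ L, c ∉ W) (hB : (∑ x ∈ W, cost x) + (L.map cost).sum ≤ B) :
    ∑ x ∈ greedyFrom B cost W L, cost x = (∑ x ∈ W, cost x) + (L.map cost).sum := by
  induction L generalizing W with
  | nil => simp [greedyFrom]
  | cons c L ih =>
    obtain ⟨hcL, hL⟩ := List.nodup_cons.1 hL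
    have hcW := hLW c List.mem_cons_self
    simp only [List.map_cons, List.sum_cons] at hB ⊢
    have hLW' : ∀ d ∈ L, d ∉ insert c W := fun d hd => by
      simp [hLW d (List.mem_cons_of_mem c hd), ne_of_mem_of_not_mem hd hcL]
    rw [greedyFrom_cons, if_pos (by omega), ih hL hLW' (by rw [Finset.sum_insert hcW]; omega),
      Finset.sum_insert hcW]
    ring

theorem sum_greedyFrom_of_cost_eq {W : Finset C} {L : List C} {a m : ℕ} (hL : L.Nodup)
    (hLW : ∀ c ∈ L, c ∉ W) (hcost : ∀ c ∈ L, cost c = a) (hm : m ≤ L.length)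
    (hfit : (∑ x ∈ W, cost x) + m * a ≤ B)
    (hmax : m = L.length ∨ B < (∑ x ∈ W, cost x) + m * a + a) :
    ∑ x ∈ greedyFrom B cost W L, cost x = (∑ x ∈ W, cost x) + m * a := by
  induction L generalizing W m with
  | nil => simp_all [greedyFrom]
  | cons c L ih =>
    obtain ⟨hcL, hL⟩ := List.nodup_cons.1 hL
    have hcW := hLW c List.mem_cons_self
    have hca := hcost c List.mem_cons_self
    rw [greedyFrom_cons]
    rcases m with _ | m
    · have hB : B < (∑ x ∈ W, cost x) + cost c := by simp_all
      rw [if_neg (by omega)]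
      exact ih hL (fun d hd => hLW d (List.mem_cons_of_mem c hd))
        (fun d hd => hcost d (List.mem_cons_of_mem c hd)) (Nat.zero_le _) (by simpa using hfit)
        (Or.inr (by simpa [hca] using hB))
    · have hLW' : ∀ d ∈ L, d ∉ insert c W := fun d hd => by
        simp [hLW d (List.mem_cons_of_mem c hd), ne_of_mem_of_not_mem hd hcL]
      have hsum : ∑ x ∈ insert c W, cost x = (∑ x ∈ W, cost x) + a := by
        rw [Finset.sum_insert hcW, hca, add_comm]
      rw [Nat.succ_mul] at hfit hmax
      simp only [List.length_cons, Nat.add_right_cancel_iff, Nat.add_le_add_iff_right] at hm hmax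
      rw [if_pos (by omega), ih (m := m) hL hLW' (fun d hd => hcost d (List.mem_cons_of_mem c hd))
        hm (by omega) (by omega), hsum, Nat.succ_mul]
      ring

end Greedy

section Order

variable {C V : Type} [Fintype C] [DecidableEq C] [Fintype V] [DecidableEq V]

theorem consOrderAV_eq_of_pairwise (E : PB C V) {rank : C → ℕ} (hrank : Function.Injective rank)
    {L : List C} (hL : ∀ c, c ∈ L)
    (hsorted : L.Pairwise fun a b =>
      E.score b < E.score a ∨ E.score a = E.score b ∧ rank a < rank b) :
    E.consOrderAV (fun c c' => decide (rank c < rank c')) = L := by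
  set le : C → C → Bool := fun c c' => decide (E.score c' < E.score c) ||
      (decide (E.score c = E.score c') && (decide (rank c < rank c') || decide (c = c')))
  have hle : ∀ a b, le a b ↔ E.score b < E.score a ∨ E.score a = E.score b ∧ rank a ≤ rank b := by
    intro a b
    simp only [le, ← hrank.eq_iff (a := a), Bool.or_eq_true, Bool.and_eq_true, decide_eq_true_eq]
    omega
  have : Std.Antisymm fun a b => le a b = true :=
    ⟨fun a b hab hba => hrank (by rw [hle] at hab hba; omega)⟩
  change (Finset.univ : Finset C).toList.mergeSort le = L
  refine List.Perm.eq_of_pairwise' (List.pairwise_mergeSort ?_ ?_ _)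
    (hsorted.imp fun h => (hle _ _).2 (by omega)) ?_
  · intro a b c; simp only [hle]; omega
  · intro a b; simp only [Bool.or_eq_true, hle]; omega
  · refine (List.mergeSort_perm _ _).trans (List.perm_of_nodup_nodup_toFinset_eq
      (Finset.nodup_toList _) ?_ (by ext; simp [hL]))
    exact hsorted.imp fun h hab => by subst hab; omega

theorem score_eq_ite_of_unit (E : PB C Unit) (c : C) :
    E.score c = if c ∈ E.A () then 1 else 0 := by
  unfold score
  split_ifs <;> simp [*]

theorem consOrderAV_eq_filter_append_filter (E : PB C Unit) {rank : C → ℕ} {R : List C}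
    (hR : R.Pairwise (rank · < rank ·)) (hmem : ∀ c, c ∈ R) :
    E.consOrderAV (fun c c' => decide (rank c < rank c')) =
      R.filter (· ∈ E.A ()) ++ R.filter (· ∉ E.A ()) := by
  have : Std.Symm fun a b : C => rank a ≠ rank b := ⟨fun _ _ h => Ne.symm h⟩
  have hrank : Function.Injective rank := fun a b hab => by
    by_contra hne
    exact (hR.imp (·.ne)).forall (hmem a) (hmem b) hne hab
  refine consOrderAV_eq_of_pairwise E hrank (fun c => by by_cases c ∈ E.A () <;> simp [*]) ?_
  simp only [List.pairwise_append, List.pairwise_filter, List.mem_filter, score_eq_ite_of_unit]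
  refine ⟨hR.imp ?_, hR.imp ?_, ?_⟩ <;> simp +contextual

end Order

end PB

namespace GreedyAVReduction

open PB

variable {n k : ℕ}

abbrev xProj (i : Fin n) : Proj n k := .inl (.inl i)

abbrev yProj (j : Fin (2 * k + 1)) : Proj n k := .inl (.inr j)

abbrev dProj (j : Fin (k + 1)) : Proj n k := .inr (.inl j)

variable (n k) in
def rankList : List (Proj n k) :=
  (List.finRange n).map xProj ++ (List.finRange (2 * k + 1)).map yProj ++
    (List.finRange (k + 1)).map dProj ++ [pProj n k]

theorem pairwise_rankList : (rankList n k).Pairwise (rank0 n k · < rank0 n k ·) := by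
  simp [rankList, List.pairwise_append, List.pairwise_map, rank0, pProj, List.pairwise_lt_finRange,
    Fin.is_le, Nat.lt_add_right, Fin.is_lt]

theorem mem_rankList (c : Proj n k) : c ∈ rankList n k := by
  rcases c with ((i | j) | (j | ⟨⟩)) <;> simp [rankList, pProj]

theorem mem_flip_E0_A {u : Fin n → ℕ} {t : ℕ} {F : Finset (Unit × Proj n k)} {c : Proj n k} :
    c ∈ ((E0 u t k).flip F).A () ↔ (isX c = false ↔ ((), c) ∉ F) := by
  simp only [PB.flip, E0, Finset.mem_symmDiff, Finset.mem_filter, Finset.mem_univ, true_and,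
    Finset.mem_image, Prod.exists, Unique.exists_iff]
  cases isX c <;> simp

def flippedX (F : Finset (Unit × Proj n k)) : Finset (Fin n) :=
  Finset.univ.filter fun i => ((), xProj i) ∈ F

def flippedXs (F : Finset (Unit × Proj n k)) : List (Proj n k) :=
  ((List.finRange n).filter fun i => ((), xProj i) ∈ F).map xProj

def unflippedYs (F : Finset (Unit × Proj n k)) : List (Proj n k) :=
  ((List.finRange (2 * k + 1)).filter fun j => ((), yProj j) ∉ F).map yProj

def unflippedDs (F : Finset (Unit × Proj n k)) : List (Proj n k) :=
  ((List.finRange (k + 1)).filter fun j => ((), dProj j) ∉ F).map dProj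

def approvedBeforeP (F : Finset (Unit × Proj n k)) : List (Proj n k) :=
  flippedXs F ++ unflippedYs F ++ unflippedDs F

theorem greedyAV_flip_E0 (u : Fin n → ℕ) (t : ℕ) (F : Finset (Unit × Proj n k)) :
    greedyAV ((E0 u t k).flip F) (fun c c' => decide (rank0 n k c < rank0 n k c')) =
      greedyFrom ((k + 1) * (3 * ∑ j, u j)) (cost0 u t k)
        (greedyFrom ((k + 1) * (3 * ∑ j, u j)) (cost0 u t k) ∅ (approvedBeforeP F))
        ((if ((), pProj n k) ∈ F then [] else [pProj n k]) ++
          (rankList n k).filter (· ∉ ((E0 u t k).flip F).A ())) := by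
  have horder : ((E0 u t k).flip F).consOrderAV
      (fun c c' => decide (rank0 n k c < rank0 n k c')) =
        approvedBeforeP F ++ ((if ((), pProj n k) ∈ F then [] else [pProj n k]) ++
          (rankList n k).filter (· ∉ ((E0 u t k).flip F).A ())) := by
    rw [consOrderAV_eq_filter_append_filter _ pairwise_rankList mem_rankList, ← List.append_assoc]
    congr 1
    simp only [mem_flip_E0_A, isX, Bool.decide_iff_dist, Bool.decide_eq_false, decide_not,
      rankList, List.append_assoc, pProj, List.filter_append, List.filter_map, Function.comp_def,
      Bool.not_true, Bool.false_beq, Bool.not_not, Bool.not_false, Bool.true_beq,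
      List.filter_singleton, Bool.cond_not, Bool.cond_decide, approvedBeforeP, flippedXs,
      unflippedYs, unflippedDs, List.append_cancel_left_eq]
    -- the two sides differ only in their `Decidable` instances
    congr
  rw [greedyAV, horder, greedyFold_eq_greedyFrom, greedyFrom_append]
  rfl

theorem pProj_not_mem_greedyFrom_approvedBeforeP (B : ℕ) (cost : Proj n k → ℕ)
    (F : Finset (Unit × Proj n k)) : pProj n k ∉ greedyFrom B cost ∅ (approvedBeforeP F) :=
  fun h => by
    simpa [approvedBeforeP, flippedXs, unflippedYs, unflippedDs, pProj] using
      greedyFrom_subset _ _ _ _ h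

section Phases

variable {u : Fin n → ℕ} {t : ℕ} {F : Finset (Unit × Proj n k)}

theorem nodup_flippedXs : (flippedXs F).Nodup :=
  ((List.nodup_finRange n).filter _).map fun _ _ h => by simpa using h

theorem nodup_unflippedYs : (unflippedYs F).Nodup :=
  ((List.nodup_finRange _).filter _).map fun _ _ h => by simpa using h

theorem nodup_unflippedDs : (unflippedDs F).Nodup :=
  ((List.nodup_finRange _).filter _).map fun _ _ h => by simpa using h

theorem card_flippedX_le : (flippedX F).card ≤ F.card :=
  Finset.card_le_card_of_injOn (fun i => ((), xProj i)) (fun i hi => by simp_all [flippedX])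
    (fun i _ j _ h => by simpa using h)

theorem length_unflippedYs : 2 * k + 1 ≤ (unflippedYs F).length + F.card := by
  simpa [unflippedYs] using List.length_le_length_filter_not_mem_add_card
    (f := fun j : Fin (2 * k + 1) => ((), (yProj j : Proj n k))) (fun i j h => by simpa using h)
    (List.nodup_finRange _) F

theorem length_unflippedDs : k + 1 ≤ (unflippedDs F).length + F.card := by
  simpa [unflippedDs] using List.length_le_length_filter_not_mem_add_card
    (f := fun j : Fin (k + 1) => ((), (dProj j : Proj n k))) (fun i j h => by simpa using h)
    (List.nodup_finRange _) F

theorem sum_le_sum_univ_flippedX : ∑ i ∈ flippedX F, u i ≤ ∑ i, u i :=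
  Finset.sum_le_sum_of_subset (Finset.subset_univ _)

theorem sum_cost_flippedXs :
    ((flippedXs F).map (cost0 u t k)).sum =
      (flippedX F).card * (3 * ∑ j, u j) + ∑ i ∈ flippedX F, u i := by
  have htoFinset :
      ((List.finRange n).filter fun i => ((), xProj i) ∈ F).toFinset = flippedX F := by
    ext i; simp [flippedX]
  rw [flippedXs, List.map_map, ← List.sum_toFinset _ ((List.nodup_finRange n).filter _),
    htoFinset]
  exact (Finset.sum_add_distrib ..).trans (by rw [Finset.sum_const, smul_eq_mul])

theorem sum_cost_greedyFrom_flippedXs (hF : F.card ≤ k) :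
    ∑ c ∈ greedyFrom ((k + 1) * (3 * ∑ j, u j)) (cost0 u t k) ∅ (flippedXs F), cost0 u t k c =
      (flippedX F).card * (3 * ∑ j, u j) + ∑ i ∈ flippedX F, u i := by
  have : (flippedX F).card * (3 * ∑ j, u j) ≤ k * (3 * ∑ j, u j) :=
    Nat.mul_le_mul_right _ (card_flippedX_le.trans hF)
  have := sum_le_sum_univ_flippedX (u := u) (F := F)
  have hB : (k + 1) * (3 * ∑ j, u j) = k * (3 * ∑ j, u j) + 3 * ∑ j, u j := by ring
  rw [sum_greedyFrom_of_sum_le _ _ nodup_flippedXs (by simp) (by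
    rw [Finset.sum_empty, sum_cost_flippedXs]; omega), Finset.sum_empty,
    sum_cost_flippedXs, zero_add]

theorem sum_cost_greedyFrom_unflippedYs (hF : F.card ≤ k) (ht : 0 < t)
    (htsum : t ≤ ∑ i, u i) :
    ∑ c ∈ greedyFrom ((k + 1) * (3 * ∑ j, u j)) (cost0 u t k)
        (greedyFrom ((k + 1) * (3 * ∑ j, u j)) (cost0 u t k) ∅ (flippedXs F)) (unflippedYs F),
        cost0 u t k c =
      if ∑ i ∈ flippedX F, u i = 0 then (k + 1) * (3 * ∑ j, u j)
      else k * (3 * ∑ j, u j) + ∑ i ∈ flippedX F, u i := by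
  have hdisj : ∀ c ∈ unflippedYs F,
      c ∉ greedyFrom ((k + 1) * (3 * ∑ j, u j)) (cost0 u t k) ∅ (flippedXs F) := by
    intro c hc hcW
    obtain ⟨j, -, rfl⟩ := List.mem_map.1 hc
    simpa [flippedXs] using greedyFrom_subset _ _ _ _ hcW
  have hcost : ∀ c ∈ unflippedYs F, cost0 u t k c = 3 * ∑ j, u j := by
    simp [unflippedYs, cost0]
  have ha := card_flippedX_le.trans hF
  have hys := length_unflippedYs (F := F)
  have hs := sum_le_sum_univ_flippedX (u := u) (F := F)
  have hka : (flippedX F).card * (3 * ∑ j, u j) + (k - (flippedX F).card) * (3 * ∑ j, u j) =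
      k * (3 * ∑ j, u j) := by rw [← Nat.add_mul, Nat.add_sub_cancel' ha]
  have hB : (k + 1) * (3 * ∑ j, u j) = k * (3 * ∑ j, u j) + 3 * ∑ j, u j := by ring
  have hW₁ := sum_cost_greedyFrom_flippedXs (t := t) (u := u) hF
  split_ifs with hs0
  · have hm : (k + 1 - (flippedX F).card) * (3 * ∑ j, u j) =
        (k - (flippedX F).card) * (3 * ∑ j, u j) + 3 * ∑ j, u j := by
      rw [show k + 1 - (flippedX F).card = (k - (flippedX F).card) + 1 by omega, add_one_mul]
    rw [sum_greedyFrom_of_cost_eq _ _ nodup_unflippedYs hdisj hcost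
      (m := k + 1 - (flippedX F).card) (by omega) (by omega) (Or.inr (by omega))]
    omega
  · rw [sum_greedyFrom_of_cost_eq _ _ nodup_unflippedYs hdisj hcost
      (m := k - (flippedX F).card) (by omega) (by omega) (Or.inr (by omega))]
    omega

theorem sum_cost_greedyFrom_approvedBeforeP_le_iff (hF : F.card ≤ k) (ht : 0 < t)
    (htsum : t ≤ ∑ i, u i) :
    ∑ c ∈ greedyFrom ((k + 1) * (3 * ∑ j, u j)) (cost0 u t k) ∅ (approvedBeforeP F),
        cost0 u t k c ≤ k * (3 * ∑ j, u j) + t ↔ ∑ i ∈ flippedX F, u i = t := by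
  rw [approvedBeforeP, greedyFrom_append, greedyFrom_append]
  have hdisj : ∀ c ∈ unflippedDs F, c ∉ greedyFrom ((k + 1) * (3 * ∑ j, u j)) (cost0 u t k)
      (greedyFrom ((k + 1) * (3 * ∑ j, u j)) (cost0 u t k) ∅ (flippedXs F)) (unflippedYs F) := by
    intro c hc hcW
    obtain ⟨j, -, rfl⟩ := List.mem_map.1 hc
    simpa [flippedXs, unflippedYs] using ((greedyFrom_subset _ _ _ _).trans
      (Finset.union_subset_union_left (greedyFrom_subset _ _ _ _))) hcW
  have hcost : ∀ c ∈ unflippedDs F, cost0 u t k c = 3 * ∑ j, u j - t + 1 := by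
    simp [unflippedDs, cost0]
  have hds := length_unflippedDs (F := F)
  have hs := sum_le_sum_univ_flippedX (u := u) (F := F)
  have hB : (k + 1) * (3 * ∑ j, u j) = k * (3 * ∑ j, u j) + 3 * ∑ j, u j := by ring
  have hW₂ := sum_cost_greedyFrom_unflippedYs (t := t) hF ht htsum
  split_ifs at hW₂ with hs0
  · rw [sum_greedyFrom_of_cost_eq _ _ nodup_unflippedDs hdisj hcost (m := 0)
      (by omega) (by omega) (Or.inr (by omega))]
    omega
  rcases lt_or_ge (∑ i ∈ flippedX F, u i) t with hst | hst
  · rw [sum_greedyFrom_of_cost_eq _ _ nodup_unflippedDs hdisj hcost (m := 1)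
      (by omega) (by omega) (Or.inr (by omega))]
    omega
  · rw [sum_greedyFrom_of_cost_eq _ _ nodup_unflippedDs hdisj hcost (m := 0)
      (by omega) (by omega) (Or.inr (by omega))]
    omega

end Phases

end GreedyAVReduction

theorem stmt0_general (n k t : ℕ) (u : Fin n → ℕ)
    (ht : 0 < t) (htsum : t ≤ ∑ i, u i)
    (hsize : ∀ S : Finset (Fin n), ∑ i ∈ S, u i = t → S.card = k) :
    (∃ F : Finset (Unit × Proj n k), F.card ≤ k ∧
        pProj n k ∈ PB.greedyAV ((E0 u t k).flip F)
          (fun c c' => decide (rank0 n k c < rank0 n k c'))) ↔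
      ∃ S : Finset (Fin n), S.card = k ∧ ∑ i ∈ S, u i = t :=
  open GreedyAVReduction PB in by
  have hB : (k + 1) * (3 * ∑ j, u j) = k * (3 * ∑ j, u j) + 3 * ∑ j, u j := by ring
  have hcost : cost0 u t k (pProj n k) = 3 * ∑ j, u j - t := rfl
  constructor
  · rintro ⟨F, hF, hp⟩
    rw [greedyAV_flip_E0] at hp
    have hfit := sum_add_cost_le_of_mem_greedyFrom _ _
      (pProj_not_mem_greedyFrom_approvedBeforeP _ _ F) hp
    have hs := (sum_cost_greedyFrom_approvedBeforeP_le_iff hF ht htsum).1 (by omega)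
    exact ⟨_, hsize _ hs, hs⟩
  · rintro ⟨S, hS, hSt⟩
    let F : Finset (Unit × Proj n k) := S.image fun i => ((), xProj i)
    have hF : F.card ≤ k := Finset.card_image_le.trans hS.le
    have hX : flippedX F = S := by ext i; simp [F, flippedX]
    have hpF : ((), pProj n k) ∉ F := by simp [F, pProj]
    refine ⟨F, hF, ?_⟩
    rw [greedyAV_flip_E0, if_neg hpF]
    have := (sum_cost_greedyFrom_approvedBeforeP_le_iff hF ht htsum).2 (hX ▸ hSt)
    exact mem_greedyFrom_cons _ _ _ (by omega)

theorem stmt0 (n k t : ℕ) (u : Fin n → ℕ) (hu : ∀ i, 0 < u i)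
    (ht : 0 < t) (hk : 0 < k) (htsum : t ≤ ∑ i, u i)
    (hsize : ∀ S : Finset (Fin n), ∑ i ∈ S, u i = t → S.card = k) :
    (∃ F : Finset (Unit × Proj n k), F.card ≤ k ∧
        pProj n k ∈ PB.greedyAV ((E0 u t k).flip F)
          (fun c c' => decide (rank0 n k c < rank0 n k c'))) ↔
      ∃ S : Finset (Fin n), S.card = k ∧ ∑ i ∈ S, u i = t :=
  stmt0_general n k t u ht htsum hsize
end

section
/- Let u_1, …, u_n be positive integers, T = u_1 + … + u_n, and let t and k be integers with 0 < t < T and k ≥ 0. Let E be the PB instance with projects C = {x_1,…,x_n, p}, costs cost(x_i) = u_i and cost(p) = 2T − t, budget B = 2T, and a single voter who approves only p; run GreedyAV with cheaper-first tie-breaking. Then the number of sets F of exactly k approval flips (equivalently, size-k subsets of C whose approval status is toggled for the voter) such that p ∈ GreedyAV(E_F) equals the number of subsets S ⊆ {1,…,n} with |S| = k and Σ_{i∈S} u_i ≤ t. -/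
/-! Statement 5: counting briberies in the `#P`-hardness reduction for
GreedyAV with cheaper-first tie-breaking (budget `2T`). -/

/-- Costs: `cost(x_i) = u_i` and `cost(p) = 2T − t`, where `T = u_1 + … + u_n`. -/
def cost5 {n : ℕ} (u : Fin n → ℕ) (t : ℕ) : (Fin n ⊕ Unit) → ℕ
  | .inl i => u i
  | .inr _ => 2 * (∑ j, u j) - t

/-- The PB instance: a single voter approving only `p`, budget `2T`. -/
def E5 {n : ℕ} (u : Fin n → ℕ) (t : ℕ) : PB (Fin n ⊕ Unit) Unit where
  A := fun _ => {Sum.inr ()}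
  budget := 2 * ∑ j, u j
  cost := cost5 u t


open Finset

theorem isStrictTotalOrder_lex_on {α β : Type*} [LinearOrder β] (f : α → β) (r : α → α → Prop)
    [IsStrictTotalOrder α r] :
    IsStrictTotalOrder α (fun a b => f a < f b ∨ f a = f b ∧ r a b) := by
  have hinj : Function.Injective fun a => (f a, a) := fun _ _ h => (Prod.ext_iff.mp h).2
  have : IsStrictTotalOrder (β × α) (Prod.Lex (· < ·) r) := {}
  convert hinj.isStrictTotalOrder_onFun (Prod.Lex (· < ·) r) using 1
  ext a b
  simp only [Function.onFun, Prod.lex_iff]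

theorem pairwise_mergeSort_of_iff {α : Type*} {r : α → α → Prop} [IsStrictTotalOrder α r]
    {le : α → α → Bool} (hle : ∀ a b, le a b = true ↔ r a b ∨ a = b) (l : List α) :
    (l.mergeSort le).Pairwise fun a b => r a b ∨ a = b := by
  refine (List.pairwise_mergeSort (fun a b c hab hbc => ?_) (fun a b => ?_) l).imp (hle _ _).mp
  · rw [hle] at hab hbc ⊢
    rcases hab with hab | rfl
    · rcases hbc with hbc | rfl
      exacts [Or.inl (_root_.trans hab hbc), Or.inl hab]
    · exact hbc
  · rw [Bool.or_eq_true, hle, hle]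
    rcases trichotomous_of r a b with h | h | h <;> simp [h]

theorem toFinset_eq_filter_of_pairwise {α : Type*} [DecidableEq α] {r : α → α → Prop}
    [IsStrictOrder α r] [DecidableRel r] {p : α} {m₁ m₂ : List α}
    (hs : (m₁ ++ p :: m₂).Pairwise fun a b => r a b ∨ a = b) (hnd : (m₁ ++ p :: m₂).Nodup) :
    m₁.toFinset = (m₁ ++ p :: m₂).toFinset.filter (r · p) := by
  obtain ⟨-, hs₂, hs₁₂⟩ := List.pairwise_append.mp hs
  have hp₁ : p ∉ m₁ := fun h => (List.nodup_append.mp hnd).2.2 p h p (by simp) rfl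
  ext c
  simp only [mem_filter, List.mem_toFinset, List.mem_append, List.mem_cons]
  constructor
  · intro hc
    refine ⟨Or.inl hc, (hs₁₂ c hc p (by simp)).resolve_right ?_⟩
    rintro rfl
    exact hp₁ hc
  · rintro ⟨hc | rfl | hc, hcp⟩
    · exact hc
    · exact absurd hcp (irrefl c)
    · obtain hpc | rfl := (List.pairwise_cons.mp hs₂).1 c hc
      exacts [absurd hpc (asymm hcp), absurd hcp (irrefl _)]

section Greedy

variable {C : Type} [DecidableEq C] (budget : ℕ) (cost : C → ℕ)

def greedyStep (W : Finset C) (c : C) : Finset C :=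
  if (∑ x ∈ W, cost x) + cost c ≤ budget then insert c W else W

theorem greedyFold_eq_foldl (L : List C) :
    PB.greedyFold budget cost L = L.foldl (greedyStep budget cost) ∅ := rfl

theorem subset_foldl_greedyStep (L : List C) (W : Finset C) :
    W ⊆ L.foldl (greedyStep budget cost) W := by
  induction L generalizing W with
  | nil => exact subset_rfl
  | cons c L ih =>
    refine subset_trans ?_ (ih _)
    unfold greedyStep
    split_ifs
    exacts [subset_insert _ _, subset_rfl]

theorem foldl_greedyStep_subset (L : List C) (W : Finset C) :
    L.foldl (greedyStep budget cost) W ⊆ W ∪ L.toFinset := by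
  induction L generalizing W with
  | nil => simp
  | cons c L ih =>
    refine subset_trans (ih _) ?_
    unfold greedyStep
    split_ifs <;> intro x <;> simp +contextual

theorem foldl_greedyStep_of_sum_le (L : List C) (W : Finset C) (hnd : L.Nodup)
    (hdisj : Disjoint W L.toFinset) (hfit : ∑ x ∈ W, cost x + (L.map cost).sum ≤ budget) :
    L.foldl (greedyStep budget cost) W = W ∪ L.toFinset := by
  induction L generalizing W with
  | nil => simp
  | cons c L ih =>
    obtain ⟨hcL, hLnd⟩ := List.nodup_cons.mp hnd
    have hcW : c ∉ W := disjoint_right.mp hdisj (by simp)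
    rw [List.map_cons, List.sum_cons] at hfit
    rw [List.foldl_cons, greedyStep, if_pos (by omega), ih _ hLnd]
    · ext; simp
    · simpa [hcL, disjoint_insert_left] using disjoint_of_subset_right (by simp) hdisj
    · rw [sum_insert hcW]; omega

theorem mem_greedyFold_append_cons_iff {p : C} {m₁ m₂ : List C} (hnd : (m₁ ++ p :: m₂).Nodup)
    (hfit : (m₁.map cost).sum ≤ budget) :
    p ∈ PB.greedyFold budget cost (m₁ ++ p :: m₂) ↔ (m₁.map cost).sum + cost p ≤ budget := by
  obtain ⟨hnd₁, hnd₂, hdisj⟩ := List.nodup_append.mp hnd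
  have hp₁ : p ∉ m₁ := fun h => hdisj p h p (by simp) rfl
  have hp₂ : p ∉ m₂ := (List.nodup_cons.mp hnd₂).1
  rw [greedyFold_eq_foldl, List.foldl_append,
    foldl_greedyStep_of_sum_le budget cost m₁ ∅ hnd₁ (by simp) (by simpa using hfit),
    empty_union, List.foldl_cons, greedyStep, List.sum_toFinset _ hnd₁]
  split_ifs with h
  · exact iff_of_true (subset_foldl_greedyStep budget cost m₂ _ (mem_insert_self p _)) h
  · refine iff_of_false (fun hp => ?_) h
    simpa [hp₁, hp₂] using foldl_greedyStep_subset budget cost m₂ _ hp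

end Greedy

theorem PB.isStrictTotalOrder_cheaperFirst {C : Type} (cost : C → ℕ) (prec₀ : C → C → Bool)
    [IsStrictTotalOrder C fun a b => prec₀ a b = true] :
    IsStrictTotalOrder C fun a b => cheaperFirst cost prec₀ a b = true := by
  convert isStrictTotalOrder_lex_on cost fun a b => prec₀ a b = true using 1
  ext a b
  simp [cheaperFirst]

namespace PB

variable {C V : Type} [Fintype C] [DecidableEq C] [Fintype V] [DecidableEq V]

def ConsideredBefore (E : PB C V) (prec : C → C → Bool) (c c' : C) : Prop :=
  E.score c' < E.score c ∨ E.score c = E.score c' ∧ prec c c' = true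

instance (E : PB C V) (prec : C → C → Bool) : DecidableRel (E.ConsideredBefore prec) :=
  fun _ _ => inferInstanceAs (Decidable (_ ∨ _))

theorem isStrictTotalOrder_consideredBefore (E : PB C V) (prec : C → C → Bool)
    [IsStrictTotalOrder C fun a b => prec a b = true] :
    IsStrictTotalOrder C (E.ConsideredBefore prec) := by
  convert isStrictTotalOrder_lex_on (fun c => OrderDual.toDual (E.score c))
    fun a b => prec a b = true using 1
  ext a b
  simp only [ConsideredBefore, OrderDual.toDual_lt_toDual, OrderDual.toDual_inj]

theorem consOrderAV_pairwise (E : PB C V) (prec : C → C → Bool)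
    [IsStrictTotalOrder C fun a b => prec a b = true] :
    (E.consOrderAV prec).Pairwise fun a b => E.ConsideredBefore prec a b ∨ a = b := by
  have := E.isStrictTotalOrder_consideredBefore prec
  refine pairwise_mergeSort_of_iff (fun a b => ?_) _
  simp only [ConsideredBefore, Bool.or_eq_true, Bool.and_eq_true, decide_eq_true_eq]
  constructor
  · rintro (h | ⟨h, h' | rfl⟩) <;> simp [*]
  · rintro ((h | ⟨h, h'⟩) | rfl) <;> simp [*]

theorem mem_greedyAV_iff (E : PB C V) (prec : C → C → Bool)
    [IsStrictTotalOrder C fun a b => prec a b = true] {p : C}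
    (hfit : ∑ c ∈ univ.filter (E.ConsideredBefore prec · p), E.cost c ≤ E.budget) :
    p ∈ E.greedyAV prec ↔
      ∑ c ∈ univ.filter (E.ConsideredBefore prec · p), E.cost c + E.cost p ≤ E.budget := by
  have := E.isStrictTotalOrder_consideredBefore prec
  have hperm : (E.consOrderAV prec).Perm univ.toList := List.mergeSort_perm _ _
  have hnd : (E.consOrderAV prec).Nodup := hperm.nodup_iff.mpr (nodup_toList _)
  obtain ⟨m₁, m₂, hL⟩ := List.append_of_mem (hperm.mem_iff.mpr (mem_toList.mpr (mem_univ p)))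
  have hm₁ : m₁.toFinset = univ.filter (E.ConsideredBefore prec · p) := by
    rw [toFinset_eq_filter_of_pairwise (hL ▸ E.consOrderAV_pairwise prec) (hL ▸ hnd), ← hL,
      List.toFinset_eq_of_perm _ _ hperm, toList_toFinset]
  rw [hL] at hnd
  rw [← hm₁, List.sum_toFinset _ (List.nodup_append.mp hnd).1] at hfit ⊢
  rw [greedyAV, ← mem_greedyFold_append_cons_iff _ _ hnd hfit, ← hL]

theorem score_eq_ite [Subsingleton V] (E : PB C V) (v : V) (c : C) :
    E.score c = if c ∈ E.A v then 1 else 0 := by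
  have hfilter : univ.filter (fun w => c ∈ E.A w) = if c ∈ E.A v then {v} else ∅ := by
    ext w
    rw [Subsingleton.elim w v]
    split_ifs <;> simp [*]
  rw [score, hfilter]
  split_ifs <;> rfl

theorem mem_flip_A_iff (E : PB C V) (F : Finset (V × C)) (v : V) (c : C) :
    c ∈ (E.flip F).A v ↔ (c ∈ E.A v ↔ (v, c) ∉ F) := by
  have hflipped : c ∈ (F.filter fun q => q.1 = v).image Prod.snd ↔ (v, c) ∈ F := by
    simp only [mem_image, mem_filter, Prod.exists]
    constructor
    · rintro ⟨w, c, ⟨h, rfl⟩, rfl⟩; exact h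
    · intro h; exact ⟨v, c, ⟨h, rfl⟩, rfl⟩
  rw [flip, mem_symmDiff, hflipped]
  tauto

end PB

def flippedLeft {α : Type*} [Fintype α] [DecidableEq α] (F : Finset (Unit × (α ⊕ Unit))) :
    Finset α :=
  univ.filter fun i => ((), .inl i) ∈ F

theorem card_filter_flips_eq {α : Type*} [Fintype α] [DecidableEq α] (k : ℕ)
    (P : Finset α → Prop) [DecidablePred P] :
    (univ.filter fun F : Finset (Unit × (α ⊕ Unit)) =>
        F.card = k ∧ ((), .inr ()) ∉ F ∧ P (flippedLeft F)).card =
      (univ.filter fun S : Finset α => S.card = k ∧ P S).card := by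
  let e : α ↪ Unit × (α ⊕ Unit) := ⟨fun i => ((), .inl i), fun _ _ h => by simpa using h⟩
  have he (i : α) : e i = ((), .inl i) := rfl
  have hleft (S : Finset α) : flippedLeft (S.map e) = S := by ext; simp [flippedLeft, he]
  have hmap {F : Finset (Unit × (α ⊕ Unit))} (hF : ((), .inr ()) ∉ F) :
      (flippedLeft F).map e = F := by
    ext ⟨⟨⟩, c | ⟨⟩⟩ <;> simp [flippedLeft, he, hF]
  refine card_nbij' flippedLeft (·.map e) ?_ ?_ ?_ ?_
  · intro F hF
    simp only [coe_filter, mem_univ, true_and, Set.mem_ofPred_eq] at hF ⊢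
    exact ⟨by rw [← card_map e, hmap hF.2.1, hF.1], hF.2.2⟩
  · intro S hS
    simp only [coe_filter, mem_univ, true_and, Set.mem_ofPred_eq] at hS ⊢
    exact ⟨by rw [card_map, hS.1], by simp [he], by rw [hleft]; exact hS.2⟩
  · intro F hF
    exact hmap (by simp_all)
  · intro S _
    exact hleft S

section Reduction

variable {n : ℕ} (u : Fin n → ℕ) (t : ℕ) (prec₀ : (Fin n ⊕ Unit) → (Fin n ⊕ Unit) → Bool)

theorem cost5_inl_lt (htT : t < ∑ i, u i) (i : Fin n) :
    cost5 u t (.inl i) < cost5 u t (.inr ()) := by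
  have := single_le_sum (fun j _ => Nat.zero_le (u j)) (mem_univ i)
  simp only [cost5]
  omega

theorem score_flip_E5 (F : Finset (Unit × (Fin n ⊕ Unit))) (c : Fin n ⊕ Unit) :
    ((E5 u t).flip F).score c = if (c = .inr () ↔ ((), c) ∉ F) then 1 else 0 := by
  simp [PB.score_eq_ite _ (), PB.mem_flip_A_iff, E5]

theorem consideredBefore_flip_E5_iff (htT : t < ∑ i, u i) (F : Finset (Unit × (Fin n ⊕ Unit)))
    (i : Fin n) :
    ((E5 u t).flip F).ConsideredBefore (PB.cheaperFirst (cost5 u t) prec₀) (.inl i) (.inr ()) ↔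
      ((), .inr ()) ∈ F ∨ ((), .inl i) ∈ F := by
  have hcost := cost5_inl_lt u t htT i
  simp only [PB.ConsideredBefore, score_flip_E5, PB.cheaperFirst, hcost, decide_true, Bool.true_or]
  split_ifs <;> simp_all

theorem mem_greedyAV_flip_E5_iff (htT : t < ∑ i, u i)
    [IsStrictTotalOrder (Fin n ⊕ Unit) fun a b => prec₀ a b = true]
    (F : Finset (Unit × (Fin n ⊕ Unit))) :
    .inr () ∈ PB.greedyAV ((E5 u t).flip F) (PB.cheaperFirst (cost5 u t) prec₀) ↔
      ((), .inr ()) ∉ F ∧ ∑ i ∈ flippedLeft F, u i ≤ t := by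
  have := PB.isStrictTotalOrder_cheaperFirst (cost5 u t) prec₀
  have := ((E5 u t).flip F).isStrictTotalOrder_consideredBefore (PB.cheaperFirst (cost5 u t) prec₀)
  have hbefore : ∑ c ∈ univ.filter (((E5 u t).flip F).ConsideredBefore
        (PB.cheaperFirst (cost5 u t) prec₀) · (.inr ())), ((E5 u t).flip F).cost c =
      ∑ i ∈ univ.filter (fun i => ((), .inr ()) ∈ F ∨ ((), .inl i) ∈ F), u i := by
    rw [sum_filter, sum_filter, Fintype.sum_sum_type]
    simp only [consideredBefore_flip_E5_iff u t prec₀ htT, Fintype.univ_unit, sum_singleton,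
      irrefl, if_false, add_zero]
    rfl
  have hle : ∑ i ∈ univ.filter (fun i => ((), .inr ()) ∈ F ∨ ((), .inl i) ∈ F), u i ≤ ∑ i, u i :=
    sum_le_sum_of_subset (filter_subset _ _)
  have hbudget : ((E5 u t).flip F).budget = 2 * ∑ i, u i := rfl
  have hcost : ((E5 u t).flip F).cost (.inr ()) = 2 * (∑ i, u i) - t := rfl
  rw [PB.mem_greedyAV_iff _ _ (by omega), hbefore, hbudget, hcost]
  by_cases hp : ((), .inr ()) ∈ F
  · simp only [hp, true_or, filter_true, not_true_eq_false, false_and, iff_false, not_le]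
    omega
  · simp only [hp, false_or, not_false_eq_true, flippedLeft, true_and]
    omega

end Reduction

theorem stmt5_general (n k t : ℕ) (u : Fin n → ℕ)
    (htT : t < ∑ i, u i)
    (prec0 : (Fin n ⊕ Unit) → (Fin n ⊕ Unit) → Bool)
    (hlin : IsStrictTotalOrder (Fin n ⊕ Unit) fun a b => prec0 a b = true) :
    (Finset.univ.filter fun F : Finset (Unit × (Fin n ⊕ Unit)) =>
        F.card = k ∧ (Sum.inr () : Fin n ⊕ Unit) ∈
          PB.greedyAV ((E5 u t).flip F) (PB.cheaperFirst (cost5 u t) prec0)).card =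
      (Finset.univ.filter fun S : Finset (Fin n) =>
        S.card = k ∧ ∑ i ∈ S, u i ≤ t).card := by
  simp only [mem_greedyAV_flip_E5_iff u t prec0 htT]
  exact card_filter_flips_eq k fun S => ∑ i ∈ S, u i ≤ t

theorem stmt5 (n k t : ℕ) (u : Fin n → ℕ) (hu : ∀ i, 0 < u i)
    (ht : 0 < t) (htT : t < ∑ i, u i)
    (prec0 : (Fin n ⊕ Unit) → (Fin n ⊕ Unit) → Bool)
    (hlin : IsStrictTotalOrder (Fin n ⊕ Unit) fun a b => prec0 a b = true) :
    (Finset.univ.filter fun F : Finset (Unit × (Fin n ⊕ Unit)) =>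
        F.card = k ∧ (Sum.inr () : Fin n ⊕ Unit) ∈
          PB.greedyAV ((E5 u t).flip F) (PB.cheaperFirst (cost5 u t) prec0)).card =
      (Finset.univ.filter fun S : Finset (Fin n) =>
        S.card = k ∧ ∑ i ∈ S, u i ≤ t).card :=
  stmt5_general n k t u htT prec0 hlin
end

section
/- Let u_1, …, u_n be positive integers and t, k positive integers such that u_i < t for every i, k < n, and every subset S ⊆ {1,…,n} with |S| < k satisfies Σ_{i∈S} u_i < t. Let E be the PB instance with projects C = {p, c_1,…,c_n, d_1,…,d_{k+1}}, costs cost(p) = t, cost(c_i) = u_i, cost(d_j) = t + 1, a single voter who approves exactly the projects in C ∖ {p}, budget B = u_1 + … + u_n, and GreedyCost run with a tie-breaking order ≻ whose most-preferred element is p. Then there exists a set F of at most k approval flips with p ∈ GreedyCost(E_F) if and only if there exists S ⊆ {1,…,n} with |S| = k and Σ_{i∈S} u_i = t. -/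
/-! The reduction from Sized Subset Sum to GreedyCost-Flip-Bribery
(Theorem `greedycost-pb-npc`). -/

/-- The projects: `p`, `c_1, …, c_n`, and the dummy projects `d_1, …, d_{k+1}`. -/
abbrev Proj8 (n k : ℕ) := Unit ⊕ (Fin n ⊕ Fin (k + 1))

/-- The preferred project `p`. -/
def pProj8 (n k : ℕ) : Proj8 n k := Sum.inl ()

/-- Costs: `cost(p) = t`, `cost(c_i) = u_i`, `cost(d_j) = t + 1`. -/
def cost8 {n : ℕ} (u : Fin n → ℕ) (t k : ℕ) : Proj8 n k → ℕ
  | .inl _ => t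
  | .inr (.inl i) => u i
  | .inr (.inr _) => t + 1

/-- The PB instance: a single voter approving everything except `p`, and
budget `B = u_1 + … + u_n`. -/
def E8 {n : ℕ} (u : Fin n → ℕ) (t k : ℕ) : PB (Proj8 n k) Unit where
  A := fun _ => Finset.univ.erase (Sum.inl ())
  budget := ∑ j, u j
  cost := cost8 u t k

/-! With a single voter every score is `0` or `1`. Flipping `c_i` or `d_j` drops its ratio to `0`,
and flipping `p` raises it only to `1 / t`, below that of every unflipped `c_i`. So GreedyCost
first buys all unflipped `c_i`, leaving exactly `s`, the total cost of the flipped ones, and `p`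
fits only if `t ≤ s`. A flipped `p` comes with fewer than `k` flipped `c_i`, whence `s < t`. An
unflipped `p` scores `0`, so it is considered after the unflipped `d_j` (at least one of the
`k + 1` survives) and before every flipped project, as it wins all ties. A `d_j` is bought iff
`t + 1 ≤ s`, which leaves `s - t - 1 < t` since `s < 2 t`; otherwise `p` fits iff `s = t`,
and then the hypothesis on small sets forces exactly `k` flips. -/

namespace PB

section Greedy

variable {C : Type} [DecidableEq C] (b : ℕ) (cost : C → ℕ)

def greedyStep (W : Finset C) (c : C) : Finset C :=
  if ∑ x ∈ W, cost x + cost c ≤ b then insert c W else W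

theorem greedyFold_eq_foldl (l : List C) :
    greedyFold b cost l = l.foldl (greedyStep b cost) ∅ := rfl

theorem subset_greedyStep (W : Finset C) (c : C) : W ⊆ greedyStep b cost W c := by
  unfold greedyStep; split_ifs
  exacts [Finset.subset_insert c W, subset_rfl]

theorem subset_foldl_greedyStep (W : Finset C) (l : List C) :
    W ⊆ l.foldl (greedyStep b cost) W := by
  induction l generalizing W with
  | nil => exact subset_rfl
  | cons c l ih => exact (subset_greedyStep b cost W c).trans (ih _)

theorem foldl_greedyStep_subset (W : Finset C) (l : List C) :
    l.foldl (greedyStep b cost) W ⊆ W ∪ l.toFinset := by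
  induction l generalizing W with
  | nil => simp
  | cons c l ih =>
    refine (ih _).trans ?_
    unfold greedyStep; split_ifs
    · intro x
      simp only [Finset.mem_union, Finset.mem_insert, List.toFinset_cons]
      tauto
    · exact Finset.union_subset_union subset_rfl (by simp [Finset.subset_insert])

theorem sum_foldl_greedyStep_le (W : Finset C) (l : List C) (hW : ∑ x ∈ W, cost x ≤ b) :
    ∑ x ∈ l.foldl (greedyStep b cost) W, cost x ≤ b := by
  induction l generalizing W with
  | nil => exact hW
  | cons c l ih =>
    refine ih _ ?_
    unfold greedyStep; split_ifs with h
    · by_cases hc : c ∈ W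
      · rwa [Finset.insert_eq_of_mem hc]
      · rwa [Finset.sum_insert hc, add_comm]
    · exact hW

theorem mem_foldl_greedyStep_or_lt (W : Finset C) {l : List C} {c : C} (hc : c ∈ l) :
    c ∈ l.foldl (greedyStep b cost) W ∨
      b < ∑ x ∈ l.foldl (greedyStep b cost) W, cost x + cost c := by
  induction l generalizing W with
  | nil => simp at hc
  | cons a l ih =>
    rw [List.foldl_cons]
    rcases List.mem_cons.1 hc with rfl | hc
    · unfold greedyStep
      split_ifs with h
      · exact Or.inl (subset_foldl_greedyStep b cost _ l (Finset.mem_insert_self c W))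
      · by_cases hmem : c ∈ l.foldl (greedyStep b cost) W
        · exact Or.inl hmem
        · exact Or.inr ((not_le.1 h).trans_le (Nat.add_le_add_right
            (Finset.sum_le_sum_of_subset (subset_foldl_greedyStep b cost W l)) _))
    · exact ih _ hc

variable {b cost}

theorem greedyFold_subset (l : List C) : greedyFold b cost l ⊆ l.toFinset := by
  simpa [greedyFold_eq_foldl] using foldl_greedyStep_subset b cost ∅ l

theorem sum_greedyFold_le (l : List C) : ∑ x ∈ greedyFold b cost l, cost x ≤ b :=
  sum_foldl_greedyStep_le b cost ∅ l (by simp)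

theorem greedyFold_subset_append (l₁ l₂ : List C) :
    greedyFold b cost l₁ ⊆ greedyFold b cost (l₁ ++ l₂) := by
  rw [greedyFold_eq_foldl, greedyFold_eq_foldl, List.foldl_append]
  exact subset_foldl_greedyStep b cost _ l₂

theorem mem_greedyFold_of_sum_add_le {l : List C} {c : C} (hc : c ∈ l)
    (h : ∑ x ∈ greedyFold b cost l, cost x + cost c ≤ b) : c ∈ greedyFold b cost l :=
  (mem_foldl_greedyStep_or_lt b cost ∅ hc).resolve_right (not_lt.2 h)

theorem mem_greedyFold_append_cons_iff {l₁ l₂ : List C} {x : C}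
    (h₁ : x ∉ l₁) (h₂ : x ∉ l₂) :
    x ∈ greedyFold b cost (l₁ ++ x :: l₂) ↔
      ∑ y ∈ greedyFold b cost l₁, cost y + cost x ≤ b := by
  rw [greedyFold_eq_foldl, List.foldl_append, List.foldl_cons, ← greedyFold_eq_foldl]
  unfold greedyStep
  split_ifs with h
  · exact iff_of_true (subset_foldl_greedyStep b cost _ l₂ (Finset.mem_insert_self x _)) h
  · refine iff_of_false (fun hx => ?_) h
    rcases Finset.mem_union.1 (foldl_greedyStep_subset b cost _ l₂ hx) with hx | hx
    · exact h₁ (List.mem_toFinset.1 (greedyFold_subset l₁ hx))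
    · exact h₂ (List.mem_toFinset.1 hx)

/-- In a list sorted by `R`, `¬ R x c` places `c` before `x`. -/
theorem mem_greedyFold_of_cost_le {R : C → C → Prop} {l : List C} {x c : C}
    (hl : l.Pairwise R) (hnd : l.Nodup) (hx : x ∈ greedyFold b cost l) (hc : c ∈ l)
    (hR : ¬ R x c) (hcost : cost c ≤ cost x) : c ∈ greedyFold b cost l := by
  obtain ⟨l₁, l₂, rfl⟩ := List.append_of_mem (List.mem_toFinset.1 (greedyFold_subset l hx))
  obtain ⟨hx₁, hx₂⟩ : x ∉ l₁ ∧ x ∉ l₂ := by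
    simp only [List.nodup_append, List.nodup_cons] at hnd
    exact ⟨fun h => hnd.2.2 x h x List.mem_cons_self rfl, hnd.2.1.1⟩
  have hfit := (mem_greedyFold_append_cons_iff hx₁ hx₂).1 hx
  rcases List.mem_append.1 hc with hc | hc
  · exact greedyFold_subset_append l₁ _
      (mem_greedyFold_of_sum_add_le hc (by omega))
  rcases List.mem_cons.1 hc with rfl | hc
  · exact hx
  · exact absurd ((List.pairwise_cons.1 (List.pairwise_append.1 hl).2.1).1 c hc) hR

end Greedy

section CostOrder

variable {C V : Type} [Fintype C] [DecidableEq C] [Fintype V] [DecidableEq V]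
  (E : PB C V) (prec : C → C → Bool)

/-- The comparator by which `consOrderCost` sorts the projects. -/
def costOrder (c c' : C) : Bool :=
  decide (E.score c' * E.cost c < E.score c * E.cost c') ||
    (decide (E.score c * E.cost c' = E.score c' * E.cost c) && (prec c c' || decide (c = c')))

variable {E prec}

theorem costOrder_trans (hcost : ∀ c, 0 < E.cost c)
    (hlin : IsStrictTotalOrder C fun a b => prec a b = true) (a b c : C)
    (hab : costOrder E prec a b = true) (hbc : costOrder E prec b c = true) :
    costOrder E prec a c = true := by
  simp only [costOrder, Bool.or_eq_true, decide_eq_true_eq, Bool.and_eq_true] at hab hbc ⊢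
  have hwa := hcost a; have hwb := hcost b; have hwc := hcost c
  rcases hab with hab | ⟨hab, pab⟩ <;> rcases hbc with hbc | ⟨hbc, pbc⟩
  · left; nlinarith
  · left; nlinarith
  · left; nlinarith
  · right
    refine ⟨Nat.eq_of_mul_eq_mul_right hwb (by nlinarith), ?_⟩
    rcases pab with pab | rfl
    · rcases pbc with pbc | rfl
      · exact Or.inl (hlin.trans a b c pab pbc)
      · exact Or.inl pab
    · exact pbc

theorem costOrder_total (hlin : IsStrictTotalOrder C fun a b => prec a b = true) (a b : C) :
    (costOrder E prec a b || costOrder E prec b a) = true := by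
  simp only [costOrder, Bool.or_eq_true, decide_eq_true_eq, Bool.and_eq_true]
  rcases Nat.lt_trichotomy (E.score b * E.cost a) (E.score a * E.cost b) with h | h | h
  · tauto
  · by_cases hab : prec a b = true
    · exact Or.inl (Or.inr ⟨h.symm, Or.inl hab⟩)
    by_cases hba : prec b a = true
    · exact Or.inr (Or.inr ⟨h, Or.inl hba⟩)
    exact Or.inl (Or.inr ⟨h.symm, Or.inr (hlin.trichotomous a b hab hba)⟩)
  · tauto

theorem costOrder_eq_false_of_lt {x y : C} (h : E.score y * E.cost x < E.score x * E.cost y) :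
    costOrder E prec y x = false := by
  simp only [costOrder, Bool.or_eq_false_iff, decide_eq_false_iff_not, Bool.and_eq_false_iff]
  exact ⟨by omega, Or.inl (by omega)⟩

theorem pairwise_consOrderCost (hcost : ∀ c, 0 < E.cost c)
    (hlin : IsStrictTotalOrder C fun a b => prec a b = true) :
    (E.consOrderCost prec).Pairwise fun a b => costOrder E prec a b = true :=
  List.pairwise_mergeSort (costOrder_trans hcost hlin) (costOrder_total hlin) _

theorem nodup_consOrderCost : (E.consOrderCost prec).Nodup :=
  (List.mergeSort_perm _ _).nodup_iff.2 (Finset.nodup_toList _)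

variable (E prec) in
theorem mem_consOrderCost (c : C) : c ∈ E.consOrderCost prec :=
  List.mem_mergeSort.2 (Finset.mem_toList.2 (Finset.mem_univ c))

variable (E prec) in
theorem exists_consOrderCost_eq_append (y : C) :
    ∃ l₁ l₂, E.consOrderCost prec = l₁ ++ y :: l₂ :=
  List.append_of_mem (mem_consOrderCost E prec y)

variable {l₁ l₂ : List C} {x y : C}

theorem nodup_split_of_consOrderCost_eq (hsplit : E.consOrderCost prec = l₁ ++ y :: l₂) :
    l₁.Nodup ∧ y ∉ l₁ ∧ y ∉ l₂ := by
  have h := nodup_consOrderCost (E := E) (prec := prec)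
  simp only [hsplit, List.nodup_append, List.nodup_cons] at h
  exact ⟨h.1, fun hy => h.2.2 y hy y List.mem_cons_self rfl, h.2.1.1⟩

theorem mem_greedyCost_iff (hsplit : E.consOrderCost prec = l₁ ++ y :: l₂) :
    y ∈ E.greedyCost prec ↔
      ∑ x ∈ greedyFold E.budget E.cost l₁, E.cost x + E.cost y ≤ E.budget := by
  obtain ⟨-, h₁, h₂⟩ := nodup_split_of_consOrderCost_eq hsplit
  rw [greedyCost, hsplit]
  exact mem_greedyFold_append_cons_iff h₁ h₂

theorem costOrder_of_mem_left (hcost : ∀ c, 0 < E.cost c)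
    (hlin : IsStrictTotalOrder C fun a b => prec a b = true)
    (hsplit : E.consOrderCost prec = l₁ ++ y :: l₂) (hx : x ∈ l₁) :
    costOrder E prec x y = true := by
  have h := pairwise_consOrderCost hcost hlin
  rw [hsplit, List.pairwise_append] at h
  exact h.2.2 x hx y List.mem_cons_self

theorem mem_left_of_costOrder_eq_false (hcost : ∀ c, 0 < E.cost c)
    (hlin : IsStrictTotalOrder C fun a b => prec a b = true)
    (hsplit : E.consOrderCost prec = l₁ ++ y :: l₂) (hxy : x ≠ y)
    (h : costOrder E prec y x = false) : x ∈ l₁ := by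
  have hpair := pairwise_consOrderCost hcost hlin
  have hx := mem_consOrderCost E prec x
  rw [hsplit] at hpair hx
  rcases List.mem_append.1 hx with hx | hx
  · exact hx
  rcases List.mem_cons.1 hx with rfl | hx
  · exact absurd rfl hxy
  · have := (List.pairwise_cons.1 (List.pairwise_append.1 hpair).2.1).1 x hx
    simp [h] at this

end CostOrder

theorem score_flip_unit {C : Type} [Fintype C] [DecidableEq C] (E : PB C Unit)
    (F : Finset (Unit × C)) (c : C) :
    (E.flip F).score c = if c ∈ symmDiff (E.A ()) (F.image Prod.snd) then 1 else 0 := by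
  unfold PB.score PB.flip
  split_ifs with h <;> simp [h]

end PB

section Reduction

variable {n k t : ℕ} {u : Fin n → ℕ} {prec : Proj8 n k → Proj8 n k → Bool}
  {F : Finset (Unit × Proj8 n k)} {S : Finset (Fin n)} {l₁ l₂ : List (Proj8 n k)}

def cProj : Fin n ↪ Proj8 n k := Function.Embedding.inl.trans Function.Embedding.inr

def dProj : Fin (k + 1) ↪ Proj8 n k := Function.Embedding.inr.trans Function.Embedding.inr

@[simp] theorem cProj_apply (i : Fin n) : (cProj i : Proj8 n k) = .inr (.inl i) := rfl

@[simp] theorem dProj_apply (j : Fin (k + 1)) : (dProj j : Proj8 n k) = .inr (.inr j) := rfl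

@[simp] theorem cost8_cProj (i : Fin n) : cost8 u t k (cProj i) = u i := rfl

@[simp] theorem cost8_dProj (j : Fin (k + 1)) : cost8 u t k (dProj j) = t + 1 := rfl

theorem cost8_pos (hu : ∀ i, 0 < u i) (ht : 0 < t) (c : Proj8 n k) : 0 < cost8 u t k c := by
  rcases c with _ | i | j
  exacts [ht, hu i, t.succ_pos]

/-- `p` scores `1` iff it is flipped, every other project iff it is unflipped. -/
theorem score_flip_E8 (F : Finset (Unit × Proj8 n k)) (c : Proj8 n k) :
    ((E8 u t k).flip F).score c = if (c = pProj8 n k ↔ c ∈ F.image Prod.snd) then 1 else 0 := by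
  rw [PB.score_flip_unit]
  refine if_congr ?_ rfl rfl
  simp only [E8, pProj8, Finset.mem_symmDiff, Finset.mem_erase, Finset.mem_univ, and_true]
  tauto

@[simp] theorem cost_flip_E8 (F : Finset (Unit × Proj8 n k)) :
    ((E8 u t k).flip F).cost = cost8 u t k := rfl

theorem score_flip_E8_eq_one {F : Finset (Unit × Proj8 n k)} {c : Proj8 n k}
    (hc : c ≠ pProj8 n k) (hcF : c ∉ F.image Prod.snd) : ((E8 u t k).flip F).score c = 1 := by
  rw [score_flip_E8, if_pos (iff_of_false hc hcF)]

theorem sum_map_cProj (T : Finset (Fin n)) :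
    ∑ x ∈ T.map (cProj (k := k)), cost8 u t k x = ∑ i ∈ T, u i := by
  rw [Finset.sum_map]; rfl

theorem cProj_mem_left (hu : ∀ i, 0 < u i) (ht : 0 < t) (hut : ∀ i, u i < t)
    (hlin : IsStrictTotalOrder (Proj8 n k) fun a b => prec a b = true)
    (hsplit : ((E8 u t k).flip F).consOrderCost prec = l₁ ++ pProj8 n k :: l₂) {i : Fin n}
    (hi : cProj i ∉ F.image Prod.snd) : cProj i ∈ l₁ := by
  refine PB.mem_left_of_costOrder_eq_false (cost8_pos hu ht) hlin hsplit (by simp [pProj8])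
    (PB.costOrder_eq_false_of_lt ?_)
  have := hut i
  simp only [score_flip_E8] at hi ⊢
  split_ifs <;> simp_all [pProj8, cost8]

theorem dProj_mem_left (hu : ∀ i, 0 < u i) (ht : 0 < t)
    (hlin : IsStrictTotalOrder (Proj8 n k) fun a b => prec a b = true)
    (hsplit : ((E8 u t k).flip F).consOrderCost prec = l₁ ++ pProj8 n k :: l₂)
    (hp : pProj8 n k ∉ F.image Prod.snd) {j : Fin (k + 1)}
    (hj : dProj j ∉ F.image Prod.snd) : dProj j ∈ l₁ := by
  refine PB.mem_left_of_costOrder_eq_false (cost8_pos hu ht) hlin hsplit (by simp [pProj8])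
    (PB.costOrder_eq_false_of_lt ?_)
  simp only [score_flip_E8] at hj ⊢
  split_ifs <;> simp_all [pProj8, cost8]

/-- If `p` is unflipped, its score `0` ties with every flipped project, and `p` wins all ties. -/
theorem notMem_image_snd_of_mem_left (hu : ∀ i, 0 < u i) (ht : 0 < t)
    (hlin : IsStrictTotalOrder (Proj8 n k) fun a b => prec a b = true)
    (hpfirst : ∀ c : Proj8 n k, c ≠ pProj8 n k → prec (pProj8 n k) c = true)
    (hsplit : ((E8 u t k).flip F).consOrderCost prec = l₁ ++ pProj8 n k :: l₂)
    (hp : pProj8 n k ∉ F.image Prod.snd) {x : Proj8 n k} (hx : x ∈ l₁) :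
    x ∉ F.image Prod.snd := by
  intro hxF
  have hxp : x ≠ pProj8 n k := fun h => hp (h ▸ hxF)
  have hprec : prec x (pProj8 n k) = false := by
    by_contra h
    exact hlin.irrefl _ (hlin.trans _ _ _ (hpfirst x hxp) (by simpa using h))
  have := PB.costOrder_of_mem_left (cost8_pos hu ht) hlin hsplit hx
  simp [PB.costOrder, score_flip_E8, hxp, hxF, hp, hprec] at this

theorem sum_map_cProj_add_le {T : Finset (Fin n)} {W : Finset (Proj8 n k)}
    (hsub : T.map cProj ⊆ W) {j : Fin (k + 1)} (hj : dProj j ∈ W) :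
    ∑ i ∈ T, u i + (t + 1) ≤ ∑ x ∈ W, cost8 u t k x := by
  have hj' : dProj j ∉ T.map (cProj (k := k)) := by simp
  calc ∑ i ∈ T, u i + (t + 1) = ∑ x ∈ insert (dProj j) (T.map cProj), cost8 u t k x := by
        rw [Finset.sum_insert hj', sum_map_cProj, add_comm]; rfl
    _ ≤ ∑ x ∈ W, cost8 u t k x := Finset.sum_le_sum_of_subset (Finset.insert_subset hj hsub)

section Prefix

theorem mem_greedyCost_flip_E8_iff
    (hsplit : ((E8 u t k).flip F).consOrderCost prec = l₁ ++ pProj8 n k :: l₂) :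
    pProj8 n k ∈ ((E8 u t k).flip F).greedyCost prec ↔
      ∑ x ∈ PB.greedyFold (∑ j, u j) (cost8 u t k) l₁, cost8 u t k x + t ≤ ∑ j, u j :=
  PB.mem_greedyCost_iff hsplit

variable (hu : ∀ i, 0 < u i) (ht : 0 < t) (hut : ∀ i, u i < t)
  (hlin : IsStrictTotalOrder (Proj8 n k) fun a b => prec a b = true)
  (hsplit : ((E8 u t k).flip F).consOrderCost prec = l₁ ++ pProj8 n k :: l₂)
  (hS : ∀ i, cProj i ∈ F.image Prod.snd ↔ i ∈ S)
include hu ht hut hlin hsplit hS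

theorem map_cProj_subset_of_fits
    (hfit : ∑ x ∈ PB.greedyFold (∑ j, u j) (cost8 u t k) l₁, cost8 u t k x + t ≤
      ∑ j, u j) :
    (Finset.univ \ S).map cProj ⊆ PB.greedyFold (∑ j, u j) (cost8 u t k) l₁ := by
  intro x hx
  obtain ⟨i, hi, rfl⟩ := Finset.mem_map.1 hx
  have hiS : cProj i ∉ F.image Prod.snd := fun h => (Finset.mem_sdiff.1 hi).2 ((hS i).1 h)
  exact PB.mem_greedyFold_of_sum_add_le (cProj_mem_left hu ht hut hlin hsplit hiS)
    (by have := hut i; rw [cost8_cProj]; omega)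

theorem map_cProj_subset_of_dProj_mem
    (hpfirst : ∀ c : Proj8 n k, c ≠ pProj8 n k → prec (pProj8 n k) c = true)
    (hp : pProj8 n k ∉ F.image Prod.snd) {j : Fin (k + 1)}
    (hj : dProj j ∈ PB.greedyFold (∑ j, u j) (cost8 u t k) l₁) :
    (Finset.univ \ S).map cProj ⊆ PB.greedyFold (∑ j, u j) (cost8 u t k) l₁ := by
  have hpair := PB.pairwise_consOrderCost (E := (E8 u t k).flip F) (cost8_pos hu ht) hlin
  rw [hsplit, List.pairwise_append] at hpair
  have hjl := List.mem_toFinset.1 (PB.greedyFold_subset l₁ hj)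
  have hjF := notMem_image_snd_of_mem_left hu ht hlin hpfirst hsplit hp hjl
  intro x hx
  obtain ⟨i, hi, rfl⟩ := Finset.mem_map.1 hx
  have hiS : cProj i ∉ F.image Prod.snd := fun h => (Finset.mem_sdiff.1 hi).2 ((hS i).1 h)
  refine PB.mem_greedyFold_of_cost_le hpair.1 (PB.nodup_split_of_consOrderCost_eq hsplit).1 hj
    (cProj_mem_left hu ht hut hlin hsplit hiS) ?_
    (by have := hut i; rw [cost8_cProj, cost8_dProj]; omega)
  refine ne_true_of_eq_false (PB.costOrder_eq_false_of_lt ?_)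
  rw [score_flip_E8_eq_one (by simp [pProj8]) hjF, score_flip_E8_eq_one (by simp [pProj8]) hiS,
    cost_flip_E8, cost8_cProj, cost8_dProj]
  have := hut i
  omega

omit hut in
theorem subset_map_cProj
    (hpfirst : ∀ c : Proj8 n k, c ≠ pProj8 n k → prec (pProj8 n k) c = true)
    (hp : pProj8 n k ∉ F.image Prod.snd)
    (hd : ∀ j, dProj j ∉ PB.greedyFold (∑ j, u j) (cost8 u t k) l₁) :
    PB.greedyFold (∑ j, u j) (cost8 u t k) l₁ ⊆ (Finset.univ \ S).map cProj := by
  intro x hx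
  have hxl := List.mem_toFinset.1 (PB.greedyFold_subset l₁ hx)
  have hxF := notMem_image_snd_of_mem_left hu ht hlin hpfirst hsplit hp hxl
  rcases x with _ | i | j
  · exact absurd hxl (PB.nodup_split_of_consOrderCost_eq hsplit).2.1
  · exact Finset.mem_map.2 ⟨i, by simpa [← hS] using hxF, rfl⟩
  · exact absurd hx (hd j)

end Prefix

theorem card_le_card_of_flipped (hS : ∀ i, cProj i ∈ F.image Prod.snd ↔ i ∈ S) :
    S.card ≤ F.card :=
  calc S.card = (S.map (cProj (k := k))).card := (Finset.card_map _).symm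
    _ ≤ (F.image Prod.snd).card := Finset.card_le_card fun x hx => by
        obtain ⟨i, hi, rfl⟩ := Finset.mem_map.1 hx
        exact (hS i).2 hi
    _ ≤ F.card := Finset.card_image_le

theorem card_lt_card_of_pProj_mem (hS : ∀ i, cProj i ∈ F.image Prod.snd ↔ i ∈ S)
    (hp : pProj8 n k ∈ F.image Prod.snd) : S.card < F.card :=
  calc S.card < (insert (pProj8 n k) (S.map cProj)).card := by
        rw [Finset.card_insert_of_notMem (by simp [pProj8]), Finset.card_map]
        exact Nat.lt_succ_self _
    _ ≤ (F.image Prod.snd).card := Finset.card_le_card <| Finset.insert_subset hp fun x hx => by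
        obtain ⟨i, hi, rfl⟩ := Finset.mem_map.1 hx
        exact (hS i).2 hi
    _ ≤ F.card := Finset.card_image_le

theorem exists_dProj_notMem (hF : F.card ≤ k) : ∃ j, dProj j ∉ F.image Prod.snd := by
  by_contra! h
  have := calc k + 1 = (Finset.univ.map (dProj (n := n) (k := k))).card := by simp
    _ ≤ (F.image Prod.snd).card := Finset.card_le_card fun x hx => by
        obtain ⟨j, -, rfl⟩ := Finset.mem_map.1 hx
        exact h j
    _ ≤ F.card := Finset.card_image_le
  omega

theorem sum_sdiff_add_sum (u : Fin n → ℕ) (S : Finset (Fin n)) :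
    ∑ i ∈ Finset.univ \ S, u i + ∑ i ∈ S, u i = ∑ j, u j :=
  Finset.sum_sdiff (Finset.subset_univ S)

theorem sum_lt_two_mul (ht : 0 < t) (hut : ∀ i, u i < t)
    (hsmall : ∀ S : Finset (Fin n), S.card < k → ∑ i ∈ S, u i < t) (hS : S.card ≤ k) :
    ∑ i ∈ S, u i < 2 * t := by
  rcases S.eq_empty_or_nonempty with rfl | ⟨i, hi⟩
  · simpa using ht
  · rw [← Finset.add_sum_erase S u hi]
    have := Finset.card_pos.2 ⟨i, hi⟩
    have := hsmall (S.erase i) (by rw [Finset.card_erase_of_mem hi]; omega)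
    have := hut i
    omega

section Selection

variable (hu : ∀ i, 0 < u i) (ht : 0 < t) (hut : ∀ i, u i < t)
  (hlin : IsStrictTotalOrder (Proj8 n k) fun a b => prec a b = true)
  (hS : ∀ i, cProj i ∈ F.image Prod.snd ↔ i ∈ S)
include hu ht hut hlin hS

theorem le_sum_of_mem_greedyCost (hp : pProj8 n k ∈ ((E8 u t k).flip F).greedyCost prec) :
    t ≤ ∑ i ∈ S, u i := by
  obtain ⟨l₁, l₂, hsplit⟩ :=
    PB.exists_consOrderCost_eq_append ((E8 u t k).flip F) prec (pProj8 n k)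
  have hfit := (mem_greedyCost_flip_E8_iff hsplit).1 hp
  have hsub := Finset.sum_le_sum_of_subset (f := cost8 u t k)
    (map_cProj_subset_of_fits hu ht hut hlin hsplit hS hfit)
  have hsplitSum := sum_sdiff_add_sum u S
  rw [sum_map_cProj] at hsub
  omega

theorem sum_le_of_mem_greedyCost
    (hpfirst : ∀ c : Proj8 n k, c ≠ pProj8 n k → prec (pProj8 n k) c = true)
    (hp : pProj8 n k ∉ F.image Prod.snd) (hs : ∑ i ∈ S, u i < 2 * t) {j : Fin (k + 1)}
    (hj : dProj j ∉ F.image Prod.snd)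
    (hmem : pProj8 n k ∈ ((E8 u t k).flip F).greedyCost prec) : ∑ i ∈ S, u i ≤ t := by
  obtain ⟨l₁, l₂, hsplit⟩ :=
    PB.exists_consOrderCost_eq_append ((E8 u t k).flip F) prec (pProj8 n k)
  have hfit := (mem_greedyCost_flip_E8_iff hsplit).1 hmem
  have hsub := map_cProj_subset_of_fits hu ht hut hlin hsplit hS hfit
  have hsplitSum := sum_sdiff_add_sum u S
  have hd : ∀ j, dProj j ∉ PB.greedyFold (∑ j, u j) (cost8 u t k) l₁ := fun j hd => by
    have := sum_map_cProj_add_le (u := u) (t := t) hsub hd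
    omega
  have hle := Finset.sum_le_sum_of_subset (f := cost8 u t k)
    (subset_map_cProj hu ht hlin hsplit hS hpfirst hp hd)
  rw [sum_map_cProj] at hle
  have hrej := mt (PB.mem_greedyFold_of_sum_add_le (dProj_mem_left hu ht hlin hsplit hp hj)) (hd j)
  rw [cost8_dProj] at hrej
  omega

theorem mem_greedyCost_of_sum_eq
    (hpfirst : ∀ c : Proj8 n k, c ≠ pProj8 n k → prec (pProj8 n k) c = true)
    (hp : pProj8 n k ∉ F.image Prod.snd) (hs : ∑ i ∈ S, u i = t) :
    pProj8 n k ∈ ((E8 u t k).flip F).greedyCost prec := by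
  obtain ⟨l₁, l₂, hsplit⟩ :=
    PB.exists_consOrderCost_eq_append ((E8 u t k).flip F) prec (pProj8 n k)
  rw [mem_greedyCost_flip_E8_iff hsplit]
  have hsplitSum := sum_sdiff_add_sum u S
  have hbudget := PB.sum_greedyFold_le (b := ∑ j, u j) (cost := cost8 u t k) l₁
  have hd : ∀ j, dProj j ∉ PB.greedyFold (∑ j, u j) (cost8 u t k) l₁ := fun j hd => by
    have := sum_map_cProj_add_le (u := u) (t := t)
      (map_cProj_subset_of_dProj_mem hu ht hut hlin hsplit hS hpfirst hp hd) hd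
    omega
  have hle := Finset.sum_le_sum_of_subset (f := cost8 u t k)
    (subset_map_cProj hu ht hlin hsplit hS hpfirst hp hd)
  rw [sum_map_cProj] at hle
  omega

end Selection

end Reduction

theorem stmt8_general (n k t : ℕ) (u : Fin n → ℕ) (hu : ∀ i, 0 < u i)
    (ht : 0 < t) (hut : ∀ i, u i < t)
    (hsmall : ∀ S : Finset (Fin n), S.card < k → ∑ i ∈ S, u i < t)
    (prec : Proj8 n k → Proj8 n k → Bool)
    (hlin : IsStrictTotalOrder (Proj8 n k) fun a b => prec a b = true)
    (hpfirst : ∀ c : Proj8 n k, c ≠ pProj8 n k → prec (pProj8 n k) c = true) :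
    (∃ F : Finset (Unit × Proj8 n k), F.card ≤ k ∧
        pProj8 n k ∈ PB.greedyCost ((E8 u t k).flip F) prec) ↔
      ∃ S : Finset (Fin n), S.card = k ∧ ∑ i ∈ S, u i = t := by
  constructor
  · rintro ⟨F, hF, hmem⟩
    set S := Finset.univ.filter fun i => cProj i ∈ F.image Prod.snd
    have hS : ∀ i, cProj i ∈ F.image Prod.snd ↔ i ∈ S := by simp [S]
    have hSk := (card_le_card_of_flipped hS).trans hF
    have hts := le_sum_of_mem_greedyCost hu ht hut hlin hS hmem
    have hp : pProj8 n k ∉ F.image Prod.snd := fun hp =>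
      (hsmall S ((card_lt_card_of_pProj_mem hS hp).trans_le hF)).not_ge hts
    obtain ⟨j, hj⟩ := exists_dProj_notMem hF
    have hst := sum_le_of_mem_greedyCost hu ht hut hlin hS hpfirst hp
      (sum_lt_two_mul ht hut hsmall hSk) hj hmem
    exact ⟨S, hSk.eq_of_not_lt fun hlt => (hsmall S hlt).not_ge hts, le_antisymm hst hts⟩
  · rintro ⟨S, hSk, hSt⟩
    exact ⟨S.image fun i => ((), cProj i), Finset.card_image_le.trans hSk.le,
      mem_greedyCost_of_sum_eq hu ht hut hlin (fun i => by simp) hpfirst (by simp [pProj8]) hSt⟩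

theorem stmt8 (n k t : ℕ) (u : Fin n → ℕ) (hu : ∀ i, 0 < u i)
    (ht : 0 < t) (hk : 0 < k) (hut : ∀ i, u i < t) (hkn : k < n)
    (hsmall : ∀ S : Finset (Fin n), S.card < k → ∑ i ∈ S, u i < t)
    (prec : Proj8 n k → Proj8 n k → Bool)
    (hlin : IsStrictTotalOrder (Proj8 n k) fun a b => prec a b = true)
    (hpfirst : ∀ c : Proj8 n k, c ≠ pProj8 n k → prec (pProj8 n k) c = true) :
    (∃ F : Finset (Unit × Proj8 n k), F.card ≤ k ∧
        pProj8 n k ∈ PB.greedyCost ((E8 u t k).flip F) prec) ↔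
      ∃ S : Finset (Fin n), S.card = k ∧ ∑ i ∈ S, u i = t :=
  stmt8_general n k t u hu ht hut hsmall prec hlin hpfirst
end

section
/- For every i with 2 ≤ i ≤ m, every s ∈ {0,…,n}, and every natural number ρ: f(i, s, ρ) = Σ_{s' = s + t_i}^{n} Σ_{x = 0}^{ρ} f(i−1, s', ρ − x) · g(i, s, x). -/
/-! Statement 11: the dynamic-programming recurrence for counting flip
assignments in the polynomial-space FPT algorithm for
`#GreedyAV-Flip-Bribery`.

Projects are indexed `1, 2, …` (1-based); `A j` is the initial approver set
of project `c_j`, and `prec` encodes the tie-breaking order on (indices of)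
projects: `prec j j'` means `c_j ≻ c_{j'}`. -/

namespace Stmt11

variable {V : Type} [Fintype V] [DecidableEq V]

/-- `tt prec j = 1` if `c_j ≻ c_{j−1}`, and `0` otherwise. -/
def tt (prec : ℕ → ℕ → Bool) (j : ℕ) : ℕ := if prec j (j - 1) then 1 else 0

/-- The resulting score of project `c_{j+1}` (1-based) under the flip
assignment `F` for `(c_1, …, c_i)`: `|A (j+1) Δ F j|`. -/
def sc (A : ℕ → Finset V) {i : ℕ} (F : Fin i → Finset V) (j : Fin i) : ℕ :=
  (symmDiff (A ((j : ℕ) + 1)) (F j)).card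

/-- `f A prec i s ρ` is the number of flip assignments `(F_1, …, F_i)` of size
exactly `ρ` whose resulting scores `s_1, …, s_i` satisfy
`s_{j−1} ≥ s_j + t_j` for every `2 ≤ j ≤ i` and `s_i = s`. -/
def f (A : ℕ → Finset V) (prec : ℕ → ℕ → Bool) (i s ρ : ℕ) : ℕ :=
  (Finset.univ.filter fun F : Fin i → Finset V =>
    (∑ j, (F j).card) = ρ ∧
    (∀ j j' : Fin i, (j' : ℕ) = (j : ℕ) + 1 →
      sc A F j' + tt prec ((j : ℕ) + 2) ≤ sc A F j) ∧
    (∀ j : Fin i, (j : ℕ) = i - 1 → sc A F j = s)).card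

/-- `g A i s x` is the number of subsets `F ⊆ V` with `|F| = x` and
`|A i Δ F| = s`. -/
def g (A : ℕ → Finset V) (i s x : ℕ) : ℕ :=
  (Finset.univ.filter fun F : Finset V =>
    F.card = x ∧ (symmDiff (A i) F).card = s).card

/-! Splitting off the last project, a flip assignment for `(c_1, …, c_i)` is a pair `(G, L)` of a
flip assignment `G` for `(c_1, …, c_{i-1})` and a flip set `L` for `c_i`. The pair is counted by
`f(i, s, ρ)` exactly when `G` is counted by `f(i-1, s', ρ - x)`, where `s'` is the last score of
`G` and `x = |L|`, when `L` is counted by `g(i, s, x)`, and when `s' ≥ s + t_i`. Summing the sizes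
of the fibres of `(G, L) ↦ (s', x)` gives the recurrence. -/

open Finset

section
variable (A : ℕ → Finset V) (prec : ℕ → ℕ → Bool)

def GreedyOrdered {i : ℕ} (F : Fin i → Finset V) : Prop :=
  ∀ j j' : Fin i, (j' : ℕ) = (j : ℕ) + 1 → sc A F j' + tt prec ((j : ℕ) + 2) ≤ sc A F j

def Admissible (s ρ : ℕ) {n : ℕ} (F : Fin (n + 1) → Finset V) : Prop :=
  (∑ j, #(F j)) = ρ ∧ GreedyOrdered A prec F ∧ sc A F (Fin.last n) = s

open Classical in
lemma f_succ_eq_card_admissible (n s ρ : ℕ) :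
    f A prec (n + 1) s ρ = #{F : Fin (n + 1) → Finset V | Admissible A prec s ρ F} := by
  unfold f Admissible GreedyOrdered
  congr! 4 with F
  refine ⟨fun h => h _ (by simp), fun h j hj => ?_⟩
  rwa [show j = Fin.last n from Fin.ext (by simpa using hj)]

lemma sc_le_card {i : ℕ} (F : Fin i → Finset V) (j : Fin i) : sc A F j ≤ Fintype.card V :=
  card_le_univ _

omit [Fintype V] in
@[simp]
lemma sc_snoc_castSucc {k : ℕ} (G : Fin k → Finset V) (L : Finset V) (j : Fin k) :
    sc A (Fin.snoc G L) j.castSucc = sc A G j := by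
  simp [sc]

omit [Fintype V] in
@[simp]
lemma sc_snoc_last {k : ℕ} (G : Fin k → Finset V) (L : Finset V) :
    sc A (Fin.snoc G L) (Fin.last k) = #(symmDiff (A (k + 1)) L) := by
  simp [sc]

omit [Fintype V] in
lemma greedyOrdered_snoc_iff {k : ℕ} (G : Fin (k + 1) → Finset V) (L : Finset V) :
    GreedyOrdered A prec (Fin.snoc G L) ↔
      GreedyOrdered A prec G ∧ #(symmDiff (A (k + 2)) L) + tt prec (k + 2) ≤ sc A G (Fin.last k) := by
  constructor
  · intro h
    refine ⟨fun j j' hj => ?_, ?_⟩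
    · simpa using h j.castSucc j'.castSucc (by simpa using hj)
    · simpa using h (Fin.last k).castSucc (Fin.last (k + 1)) (by simp)
  · rintro ⟨hG, hlast⟩ j j' hj
    induction j' using Fin.lastCases with
    | last =>
      obtain rfl : j = (Fin.last k).castSucc := Fin.ext (by simp at hj ⊢; omega)
      simpa using hlast
    | cast j' =>
      induction j using Fin.lastCases with
      | last => simp at hj; omega
      | cast j => simpa using hG j j' (by simpa using hj)

omit [Fintype V] in
lemma admissible_snoc_iff {k : ℕ} (s ρ : ℕ) (G : Fin (k + 1) → Finset V) (L : Finset V) :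
    Admissible A prec s ρ (Fin.snoc G L) ↔
      #L ≤ ρ ∧ s + tt prec (k + 2) ≤ sc A G (Fin.last k) ∧
        Admissible A prec (sc A G (Fin.last k)) (ρ - #L) G ∧ #(symmDiff (A (k + 2)) L) = s := by
  rw [Admissible, Admissible, Fin.sum_univ_castSucc, greedyOrdered_snoc_iff, sc_snoc_last]
  simp only [Fin.snoc_castSucc, Fin.snoc_last, and_true]
  constructor
  · rintro ⟨hsum, ⟨hG, hlast⟩, rfl⟩
    exact ⟨by omega, hlast, ⟨by omega, hG⟩, rfl⟩
  · rintro ⟨hL, hlast, ⟨hsum, hG⟩, rfl⟩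
    exact ⟨by omega, ⟨hG, hlast⟩, rfl⟩

open Classical in
lemma f_add_two_eq_card_snoc (k s ρ : ℕ) :
    f A prec (k + 2) s ρ =
      #{p : (Fin (k + 1) → Finset V) × Finset V | Admissible A prec s ρ (Fin.snoc p.1 p.2)} := by
  let snocEquiv : (Fin (k + 1) → Finset V) × Finset V ≃ (Fin (k + 2) → Finset V) :=
    (Equiv.prodComm _ _).trans (Fin.snocEquiv fun _ => Finset V)
  exact (f_succ_eq_card_admissible A prec (k + 1) s ρ).trans
    (card_equiv snocEquiv.symm fun F => by simp [snocEquiv, Fin.snocEquiv])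

open Classical in
lemma card_admissible_snoc_fiber {k s ρ s' x : ℕ} (hs' : s + tt prec (k + 2) ≤ s') (hx : x ≤ ρ) :
    #{p : (Fin (k + 1) → Finset V) × Finset V |
        Admissible A prec s ρ (Fin.snoc p.1 p.2) ∧ (sc A p.1 (Fin.last k), #p.2) = (s', x)} =
      f A prec (k + 1) s' (ρ - x) * g A (k + 2) s x := by
  rw [f_succ_eq_card_admissible, g, ← card_product]
  congr 1
  ext ⟨G, L⟩
  simp only [mem_filter, mem_univ, true_and, mem_product, admissible_snoc_iff, Prod.mk.injEq]
  constructor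
  · rintro ⟨⟨-, -, hG, hL⟩, rfl, rfl⟩
    exact ⟨hG, rfl, hL⟩
  · rintro ⟨hG, rfl, hL⟩
    obtain rfl : sc A G (Fin.last k) = s' := hG.2.2
    exact ⟨⟨hx, hs', hG, hL⟩, rfl, rfl⟩

lemma f_add_two (k s ρ : ℕ) :
    f A prec (k + 2) s ρ =
      ∑ s' ∈ Icc (s + tt prec (k + 2)) (Fintype.card V),
        ∑ x ∈ range (ρ + 1), f A prec (k + 1) s' (ρ - x) * g A (k + 2) s x := by
  classical
  have hmaps : ∀ p ∈ ({p | Admissible A prec s ρ (Fin.snoc p.1 p.2)} :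
      Finset ((Fin (k + 1) → Finset V) × Finset V)),
      (sc A p.1 (Fin.last k), #p.2) ∈ Icc (s + tt prec (k + 2)) (Fintype.card V) ×ˢ range (ρ + 1) := by
    rintro ⟨G, L⟩ hp
    simp only [mem_filter, mem_univ, true_and, admissible_snoc_iff] at hp
    simp only [mem_product, mem_Icc, mem_range]
    exact ⟨⟨hp.2.1, sc_le_card A G _⟩, Nat.lt_succ_of_le hp.1⟩
  rw [f_add_two_eq_card_snoc, card_eq_sum_card_fiberwise hmaps, sum_product]
  refine sum_congr rfl fun s' hs' => sum_congr rfl fun x hx => ?_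
  rw [filter_filter]
  exact card_admissible_snoc_fiber A prec (mem_Icc.1 hs').1 (Nat.le_of_lt_succ (mem_range.1 hx))

end

theorem stmt11_general (A : ℕ → Finset V) (prec : ℕ → ℕ → Bool)
    (i s ρ : ℕ) (hi2 : 2 ≤ i) :
    f A prec i s ρ =
      ∑ s' ∈ Finset.Icc (s + tt prec i) (Fintype.card V),
        ∑ x ∈ Finset.range (ρ + 1),
          f A prec (i - 1) s' (ρ - x) * g A i s x := by
  obtain ⟨k, rfl⟩ : ∃ k, i = k + 2 := ⟨i - 2, by omega⟩
  exact f_add_two A prec k s ρ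

theorem stmt11 (A : ℕ → Finset V) (prec : ℕ → ℕ → Bool) (m : ℕ)
    (i s ρ : ℕ) (hi2 : 2 ≤ i) (him : i ≤ m) (hs : s ≤ Fintype.card V) :
    f A prec i s ρ =
      ∑ s' ∈ Finset.Icc (s + tt prec i) (Fintype.card V),
        ∑ x ∈ Finset.range (ρ + 1),
          f A prec (i - 1) s' (ρ - x) * g A i s x :=
  stmt11_general A prec i s ρ hi2

end Stmt11
end
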